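/- arXiv:2309.16392 — 2 statements merged into one kernel-verified Lean document; each statement's English description precedes it below -/
import Mathlib

section
/- Consider the equation dw/dz = P(z,w)/Q(z,w), where P(z,w) = Σ_{i≥0} P_i(z)·w^i and Q(z,w) = Σ_{i≥0} Q_i(z)·w^i with P_i(z) = p_{i,0}·z^{k_i} + (higher order terms in z), p_{i,0} ≠ 0, and Q_i(z) = q_{i,0}·z^{l_i} + (higher order terms in z), q_{i,0} ≠ 0 (with k_i = +∞ when P_i ≡ 0 and l_i = +∞ when Q_i ≡ 0). Suppose (0,0) is a singular point of the equation (P(0,0) = Q(0,0) = 0) and that there exists an index j ≥ 1 satisfying: (1) k_j = l_{j−1} − 1; (2) for every i ≠ j, min{k_i, l_{i−1} − 1} > k_j + (j − i)·(p_{j,0}/q_{j−1,0}); (3) p_{j,0}/q_{j−1,0} ∈ ℚ⁺. Then (0,0) is algebraic critical; indeed, setting λ = p_{j,0}/q_{j−1,0}, for all but finitely many α ∈ ℂ the equation has a local algebraic solution at (0,0) of the form w(z) = α·z^{λ} + (terms with strictly larger rational exponents), and these give infinitely many distinct local algebraic solutions. -/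
open MvPolynomial

noncomputable section

/-- Formal derivative of a power series. -/
def dSeries (φ : PowerSeries ℂ) : PowerSeries ℂ :=
  PowerSeries.mk fun k => ((k + 1 : ℕ) : ℂ) * PowerSeries.coeff (k + 1) φ

/-- The power series `Σ_k c(k/N) t^k` encoding the Puiseux series with coefficient
function `c` after the substitution `z = t^N`. -/
def toSeries (N : ℕ) (c : ℚ → ℂ) : PowerSeries ℂ :=
  PowerSeries.mk fun k => c ((k : ℚ) / (N : ℚ))

/-- Substitute `z = t^N`, `w = φ(t)` into a bivariate polynomial (variable `0` is `z`,
variable `1` is `w`). -/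
def substS (P : MvPolynomial (Fin 2) ℂ) (N : ℕ) (φ : PowerSeries ℂ) : PowerSeries ℂ :=
  MvPolynomial.aeval ![(PowerSeries.X : PowerSeries ℂ) ^ N, φ] P

/-- `c : ℚ → ℂ` encodes a formal Puiseux series `w(z) = Σ_q c(q)·z^q`, supported on
strictly positive exponents with a common denominator `N`, which formally satisfies
the differential equation `Q(z,w)·dw/dz = P(z,w)` (after the substitution `z = t^N`
this reads `Q(t^N,φ(t))·φ'(t) = N·t^(N-1)·P(t^N,φ(t))`). -/
def IsPuiseuxSol (P Q : MvPolynomial (Fin 2) ℂ) (c : ℚ → ℂ) : Prop :=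
  ∃ N : ℕ, 0 < N ∧ (∀ q : ℚ, c q ≠ 0 → 0 < q ∧ ∃ k : ℕ, q = (k : ℚ) / (N : ℚ)) ∧
    substS Q N (toSeries N c) * dSeries (toSeries N c) =
      (N : PowerSeries ℂ) * (PowerSeries.X : PowerSeries ℂ) ^ (N - 1) *
        substS P N (toSeries N c)

/-- Shift the origin of coordinates to `(z0, w0)`. -/
def shiftP (P : MvPolynomial (Fin 2) ℂ) (z0 w0 : ℂ) : MvPolynomial (Fin 2) ℂ :=
  MvPolynomial.aeval ![(X 0 : MvPolynomial (Fin 2) ℂ) + C z0, (X 1 : MvPolynomial (Fin 2) ℂ) + C w0] P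

/-- The set of nonconstant local algebraic solutions of `Q(z,w)·dw/dz = P(z,w)` at the
point `(z0, w0)`, encoded by their Puiseux coefficient functions in the shifted
variables. -/
def localSols (P Q : MvPolynomial (Fin 2) ℂ) (z0 w0 : ℂ) : Set (ℚ → ℂ) :=
  {c | c ≠ 0 ∧ IsPuiseuxSol (shiftP P z0 w0) (shiftP Q z0 w0) c}

/-- The algebraic multiplicity `Mul(z0,w0)` of the equation `Q·dw/dz = P`:
the number of distinct nonconstant local algebraic solutions at `(z0,w0)`. -/
def mulAt (P Q : MvPolynomial (Fin 2) ℂ) (z0 w0 : ℂ) : ℕ∞ :=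
  (localSols P Q z0 w0).encard

/-- `(z0,w0)` is algebraic critical for `Q·dw/dz = P`. -/
def IsAlgCritical (P Q : MvPolynomial (Fin 2) ℂ) (z0 w0 : ℂ) : Prop :=
  (localSols P Q z0 w0).Infinite

/-- `w^d · P(z, 1/w)`. -/
def invW (P : MvPolynomial (Fin 2) ℂ) (d : ℕ) : MvPolynomial (Fin 2) ℂ :=
  ∑ m ∈ P.support, MvPolynomial.monomial
    (Finsupp.single (0 : Fin 2) (m 0) + Finsupp.single (1 : Fin 2) (d - m 1))
    (MvPolynomial.coeff m P)

/-- The algebraic multiplicity `Mul(z0,∞)` for the equation `Q·dw/dz = P`, i.e. the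
multiplicity at `(z0,0)` of the equation `dw̄/dz = -w̄²·(P/Q)(z,1/w̄)` satisfied by
`w̄ = 1/w` (with numerator and denominator cleared by `w̄^d`). -/
def mulAtInf (P Q : MvPolynomial (Fin 2) ℂ) (z0 : ℂ) : ℕ∞ :=
  mulAt (-((X 1 : MvPolynomial (Fin 2) ℂ) ^ 2 * invW P (max (P.degreeOf 1) (Q.degreeOf 1))))
    (invW Q (max (P.degreeOf 1) (Q.degreeOf 1))) z0 0

/-- `(z0,∞)` is algebraic critical for `Q·dw/dz = P`. -/
def IsAlgCriticalInf (P Q : MvPolynomial (Fin 2) ℂ) (z0 : ℂ) : Prop :=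
  IsAlgCritical (-((X 1 : MvPolynomial (Fin 2) ℂ) ^ 2 * invW P (max (P.degreeOf 1) (Q.degreeOf 1))))
    (invW Q (max (P.degreeOf 1) (Q.degreeOf 1))) z0 0

/-- `f` is a Darboux polynomial of the system `ż = A, ẇ = B` with cofactor `R`. -/
def IsDarboux (A B f R : MvPolynomial (Fin 2) ℂ) : Prop :=
  A * MvPolynomial.pderiv 0 f + B * MvPolynomial.pderiv 1 f = R * f

/-- `f` is strict: it has no factor of the form `z - z0` or `w - w0`. -/
def IsStrict (f : MvPolynomial (Fin 2) ℂ) : Prop :=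
  ∀ a : ℂ, ¬((X 0 : MvPolynomial (Fin 2) ℂ) - C a ∣ f) ∧ ¬((X 1 : MvPolynomial (Fin 2) ℂ) - C a ∣ f)

end
/-- The coefficient of `z^m·w^i` in a bivariate polynomial. -/
noncomputable def czw (P : MvPolynomial (Fin 2) ℂ) (m i : ℕ) : ℂ :=
  MvPolynomial.coeff (Finsupp.single (0 : Fin 2) m + Finsupp.single (1 : Fin 2) i) P

lemma lo_mul {f g : PowerSeries ℂ} {a b : ℕ}
    (hf : ∀ n < a, PowerSeries.coeff n f = 0) (hg : ∀ n < b, PowerSeries.coeff n g = 0) :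
    (∀ n < a + b, PowerSeries.coeff n (f * g) = 0) ∧
      PowerSeries.coeff (a + b) (f * g) = PowerSeries.coeff a f * PowerSeries.coeff b g := by
  constructor
  · intro n hn
    rw [PowerSeries.coeff_mul]
    refine Finset.sum_eq_zero fun x hx => ?_
    rw [Finset.HasAntidiagonal.mem_antidiagonal] at hx
    by_cases h1 : x.1 < a
    · rw [hf x.1 h1, zero_mul]
    · rw [hg x.2 (by omega), mul_zero]
  · rw [PowerSeries.coeff_mul]
    rw [Finset.sum_eq_single (a, b)]
    · intro x hx hne
      rw [Finset.HasAntidiagonal.mem_antidiagonal] at hx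
      by_cases h1 : x.1 < a
      · rw [hf x.1 h1, zero_mul]
      · have h2 : x.2 < b := by
          rcases Nat.lt_or_ge x.2 b with h | h
          · exact h
          · exfalso; exact hne (Prod.ext (by omega) (by omega))
        rw [hg x.2 h2, mul_zero]
    · intro h; simp at h

lemma lo_pow {φ : PowerSeries ℂ} {M : ℕ} (h : ∀ n < M, PowerSeries.coeff n φ = 0) (i : ℕ) :
    (∀ n < i * M, PowerSeries.coeff n (φ ^ i) = 0) ∧
      PowerSeries.coeff (i * M) (φ ^ i) = (PowerSeries.coeff M φ) ^ i := by
  induction i with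
  | zero => simp
  | succ i ih =>
    have hm := lo_mul ih.1 h
    have e : (i + 1) * M = i * M + M := by ring
    constructor
    · intro n hn
      rw [e] at hn
      rw [pow_succ]
      exact hm.1 n hn
    · rw [e, pow_succ, hm.2, ih.2, pow_succ]

lemma lo_CXmul {c : ℂ} {e a : ℕ} {f : PowerSeries ℂ}
    (hf : ∀ n < a, PowerSeries.coeff n f = 0) :
    (∀ n < e + a, PowerSeries.coeff n (PowerSeries.C c * PowerSeries.X ^ e * f) = 0) ∧
      PowerSeries.coeff (e + a) (PowerSeries.C c * PowerSeries.X ^ e * f) =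
        c * PowerSeries.coeff a f := by
  have hX : ∀ n < e, PowerSeries.coeff n ((PowerSeries.X : PowerSeries ℂ) ^ e) = 0 := by
    intro n hn
    rw [PowerSeries.coeff_X_pow, if_neg (by omega)]
  have hXe : PowerSeries.coeff e ((PowerSeries.X : PowerSeries ℂ) ^ e) = 1 := by
    rw [PowerSeries.coeff_X_pow, if_pos rfl]
  have h := lo_mul hX hf
  constructor
  · intro n hn
    rw [mul_assoc, PowerSeries.coeff_C_mul, h.1 n hn, mul_zero]
  · rw [mul_assoc, PowerSeries.coeff_C_mul, h.2, hXe, one_mul]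

lemma lo_dS {f : PowerSeries ℂ} {a : ℕ} (hf : ∀ n < a + 1, PowerSeries.coeff n f = 0) :
    (∀ n < a, PowerSeries.coeff n (dSeries f) = 0) ∧
      PowerSeries.coeff a (dSeries f) = ((a + 1 : ℕ) : ℂ) * PowerSeries.coeff (a + 1) f := by
  constructor
  · intro n hn
    simp only [dSeries, PowerSeries.coeff_mk]
    rw [hf (n + 1) (by omega), mul_zero]
  · simp only [dSeries, PowerSeries.coeff_mk]

lemma dSeries_coeff (φ : PowerSeries ℂ) (n : ℕ) :
    PowerSeries.coeff n (dSeries φ) = ((n + 1 : ℕ) : ℂ) * PowerSeries.coeff (n + 1) φ := by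
  simp [dSeries, PowerSeries.coeff_mk]

lemma dSeries_sub (φ ψ : PowerSeries ℂ) :
    dSeries (φ - ψ) = dSeries φ - dSeries ψ := by
  ext n
  simp only [dSeries_coeff, map_sub]
  ring

lemma lo_diff_pow {φ ψ : PowerSeries ℂ} {M k : ℕ} (hM : M ≤ k)
    (hφ : ∀ n < M, PowerSeries.coeff n φ = 0) (hψ : ∀ n < M, PowerSeries.coeff n ψ = 0)
    (hαeq : PowerSeries.coeff M φ = PowerSeries.coeff M ψ)
    (hagree : ∀ n < k, PowerSeries.coeff n φ = PowerSeries.coeff n ψ) (i : ℕ) :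
    (∀ n < k + i * M, PowerSeries.coeff n (φ ^ (i + 1) - ψ ^ (i + 1)) = 0) ∧
      PowerSeries.coeff (k + i * M) (φ ^ (i + 1) - ψ ^ (i + 1)) =
        ((i : ℂ) + 1) * (PowerSeries.coeff M φ) ^ i *
          (PowerSeries.coeff k φ - PowerSeries.coeff k ψ) := by
  have hδ : ∀ n < k, PowerSeries.coeff n (φ - ψ) = 0 := by
    intro n hn; rw [map_sub, hagree n hn, sub_self]
  induction i with
  | zero =>
    constructor
    · intro n hn; simpa using hδ n (by omega)
    · simp [map_sub]
  | succ i ih =>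
    have key : φ ^ (i + 2) - ψ ^ (i + 2) =
        φ ^ (i + 1) * (φ - ψ) + (φ ^ (i + 1) - ψ ^ (i + 1)) * ψ := by ring
    have hpow := lo_pow hφ (i + 1)
    have h1 := lo_mul hpow.1 hδ
    have h2 := lo_mul ih.1 hψ
    constructor
    · intro n hn
      have hn1 : n < (i + 1) * M + k := by
        rw [show (i + 1) * M + k = k + (i + 1) * M from by ring]; exact hn
      have hn2 : n < k + i * M + M := by
        rw [show k + i * M + M = k + (i + 1) * M from by ring]; exact hn
      rw [key, map_add, h1.1 n hn1, h2.1 n hn2, add_zero]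
    · rw [key, map_add]
      have t1 : PowerSeries.coeff (k + (i + 1) * M) (φ ^ (i + 1) * (φ - ψ)) =
          (PowerSeries.coeff M φ) ^ (i + 1) *
            (PowerSeries.coeff k φ - PowerSeries.coeff k ψ) := by
        have := h1.2
        rw [show (i + 1) * M + k = k + (i + 1) * M from by ring] at this
        rw [this, hpow.2, map_sub]
      have t2 : PowerSeries.coeff (k + (i + 1) * M) ((φ ^ (i + 1) - ψ ^ (i + 1)) * ψ) =
          ((i : ℂ) + 1) * (PowerSeries.coeff M φ) ^ i *
            (PowerSeries.coeff k φ - PowerSeries.coeff k ψ) * PowerSeries.coeff M φ := by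
        have := h2.2
        rw [show k + i * M + M = k + (i + 1) * M from by ring] at this
        rw [this, ih.2, ← hαeq]
      rw [t1, t2]
      push_cast
      ring

lemma finsupp_fin2 (m : Fin 2 →₀ ℕ) :
    m = Finsupp.single 0 (m 0) + Finsupp.single 1 (m 1) := by
  ext i
  fin_cases i <;> simp [Finsupp.single_apply]

lemma substS_eq (R : MvPolynomial (Fin 2) ℂ) (N : ℕ) (φ : PowerSeries ℂ) :
    substS R N φ = ∑ m ∈ R.support,
      PowerSeries.C (MvPolynomial.coeff m R) * PowerSeries.X ^ (N * m 0) * φ ^ (m 1) := by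
  conv_lhs => rw [substS, R.as_sum, map_sum]
  refine Finset.sum_congr rfl fun m _ => ?_
  rw [aeval_monomial]
  have h : (m.prod fun i k => (![(PowerSeries.X : PowerSeries ℂ) ^ N, φ] i) ^ k) =
      ((PowerSeries.X : PowerSeries ℂ) ^ N) ^ (m 0) * φ ^ (m 1) := by
    rw [Finsupp.prod_fintype]
    · simp [Fin.prod_univ_two]
    · intro i; exact pow_zero _
  rw [h, ← pow_mul, ← mul_assoc, ← PowerSeries.C_eq_algebraMap]

lemma sumQ (Q : MvPolynomial (Fin 2) ℂ) (N : ℕ) (φ : PowerSeries ℂ) :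
    substS Q N φ * dSeries φ = ∑ m ∈ Q.support,
      PowerSeries.C (MvPolynomial.coeff m Q) * PowerSeries.X ^ (N * m 0) *
        (φ ^ (m 1) * dSeries φ) := by
  rw [substS_eq, Finset.sum_mul]
  exact Finset.sum_congr rfl fun m _ => by ring

lemma sumP (P : MvPolynomial (Fin 2) ℂ) (N : ℕ) (φ : PowerSeries ℂ) :
    (N : PowerSeries ℂ) * (PowerSeries.X : PowerSeries ℂ) ^ (N - 1) * substS P N φ =
      ∑ m ∈ P.support,
        PowerSeries.C ((N : ℂ) * MvPolynomial.coeff m P) *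
          PowerSeries.X ^ ((N - 1) + N * m 0) * φ ^ (m 1) := by
  rw [substS_eq, Finset.mul_sum]
  refine Finset.sum_congr rfl fun m _ => ?_
  rw [pow_add, map_mul, show ((N : ℕ) : PowerSeries ℂ) = PowerSeries.C ((N : ℕ) : ℂ) from
    (map_natCast (PowerSeries.C (R := ℂ)) N).symm]
  ring

noncomputable def solC (M : ℕ) (α : ℂ) (F : ℕ → (ℕ → ℂ) → ℂ) : ℕ → ℂ
  | k =>
    if k < M then 0
    else if k = M then α
    else F k (fun i => if _h : i < k then solC M α F i else 0)
termination_by k => k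
decreasing_by exact _h

lemma solC_lt {M : ℕ} {α : ℂ} {F : ℕ → (ℕ → ℂ) → ℂ} {k : ℕ} (h : k < M) :
    solC M α F k = 0 := by rw [solC, if_pos h]

lemma solC_eq {M : ℕ} {α : ℂ} {F : ℕ → (ℕ → ℂ) → ℂ} :
    solC M α F M = α := by rw [solC, if_neg (lt_irrefl M), if_pos rfl]

lemma solC_gt {M : ℕ} {α : ℂ} {F : ℕ → (ℕ → ℂ) → ℂ} {k : ℕ} (h : M < k) :
    solC M α F k = F k (fun i => if i < k then solC M α F i else 0) := by
  rw [solC, if_neg (by omega), if_neg (by omega)]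
  simp only [dite_eq_ite]

lemma shiftP_zero (R : MvPolynomial (Fin 2) ℂ) : shiftP R 0 0 = R := by
  have h : ![(X 0 : MvPolynomial (Fin 2) ℂ) + C 0, (X 1 : MvPolynomial (Fin 2) ℂ) + C 0] =
      (X : Fin 2 → MvPolynomial (Fin 2) ℂ) := by
    funext i
    fin_cases i <;> simp
  rw [shiftP, h, aeval_X_left_apply]

set_option maxHeartbeats 1000000 in
/-- **Lemma (paper Lemma 1).** For the equation `Q(z,w)·dw/dz = P(z,w)` with
`P = Σ P_i(z)·w^i`, `Q = Σ Q_i(z)·w^i`, `(0,0)` singular, suppose there is `j ≥ 1` such that: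
(1) `k_j = l_{j-1} - 1`, where `k_j` (resp. `l_{j-1}`) is the lowest `z`-degree of `P_j`
(resp. `Q_{j-1}`), with leading low-order coefficients `p = p_{j,0}`, `q = q_{j-1,0}`;
(2) `min(k_i, l_{i-1} - 1) > k_j + (j-i)·λ` for all `i ≠ j` (encoded coefficientwise);
(3) `λ = p_{j,0}/q_{j-1,0} ∈ ℚ⁺`.
Then `(0,0)` is algebraic critical; indeed for all `α` outside a finite set there is a local
algebraic solution of the form `w(z) = α·z^λ + (higher-order terms)`. -/
theorem isAlgCritical_of_newton (P Q : MvPolynomial (Fin 2) ℂ)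
    (hP00 : MvPolynomial.coeff 0 P = 0) (hQ00 : MvPolynomial.coeff 0 Q = 0)
    (j : ℕ) (hj : 1 ≤ j) (kj : ℕ) (p q : ℂ) (lam : ℚ)
    (hpj : czw P kj j = p) (hp : p ≠ 0) (hpjlow : ∀ m < kj, czw P m j = 0)
    (hqj : czw Q (kj + 1) (j - 1) = q) (hq : q ≠ 0)
    (hqjlow : ∀ m < kj + 1, czw Q m (j - 1) = 0)
    (hlam : 0 < lam) (hratio : p = (lam : ℂ) * q)
    (h2P : ∀ i : ℕ, i ≠ j → ∀ m : ℕ,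
      (m : ℚ) ≤ (kj : ℚ) + ((j : ℚ) - (i : ℚ)) * lam → czw P m i = 0)
    (h2Q : ∀ i : ℕ, 1 ≤ i → i ≠ j → ∀ m : ℕ,
      (m : ℚ) ≤ (kj : ℚ) + ((j : ℚ) - (i : ℚ)) * lam + 1 → czw Q m (i - 1) = 0) :
    IsAlgCritical P Q 0 0 ∧
      ∃ E : Set ℂ, E.Finite ∧ ∀ α : ℂ, α ∉ E →
        ∃ c ∈ localSols P Q 0 0, c lam = α ∧ ∀ q' : ℚ, q' < lam → c q' = 0 := by
  classical
  obtain ⟨j1, rfl⟩ : ∃ j1, j = j1 + 1 := ⟨j - 1, by omega⟩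
  simp only [Nat.add_sub_cancel] at hqj hqjlow
  set N := lam.den with hNdef
  set M := lam.num.toNat with hMdef
  obtain ⟨N1, hN⟩ : ∃ n1, N = n1 + 1 := ⟨N - 1, by have := lam.den_pos; omega⟩
  obtain ⟨M1, hM⟩ : ∃ m1, M = m1 + 1 := ⟨M - 1, by
    have h0 : (0:ℤ) < lam.num := Rat.num_pos.2 hlam
    have : 0 < M := by rw [hMdef]; omega
    omega⟩
  have hNQ0 : ((N:ℕ):ℚ) ≠ 0 := by rw [hN]; exact_mod_cast Nat.succ_ne_zero N1
  have hlamN : lam * ((N:ℕ):ℚ) = ((M:ℕ):ℚ) := by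
    have h1 : ((M:ℕ):ℚ) = (lam.num:ℚ) := by
      have : (M:ℤ) = lam.num := Int.toNat_of_nonneg (le_of_lt (Rat.num_pos.2 hlam))
      exact_mod_cast this
    rw [h1]
    conv_lhs => rw [← Rat.num_div_den lam]
    rw [hNdef]
    field_simp
  have hNp : (N:ℂ) * p = (M:ℂ) * q := by
    have h2 : ((lam * ((N:ℕ):ℚ) : ℚ) : ℂ) = (((M:ℕ):ℚ) : ℂ) := by rw [hlamN]
    push_cast at h2
    rw [hratio]
    rw [← h2]
    ring
  -- the two distinguished monomials
  set mQs : Fin 2 →₀ ℕ := Finsupp.single 0 (kj + 1) + Finsupp.single 1 j1 with hmQsdef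
  set mPs : Fin 2 →₀ ℕ := Finsupp.single 0 kj + Finsupp.single 1 (j1 + 1) with hmPsdef
  have hmQs0 : mQs 0 = kj + 1 := by simp [hmQsdef, Finsupp.single_apply]
  have hmQs1 : mQs 1 = j1 := by simp [hmQsdef, Finsupp.single_apply]
  have hmPs0 : mPs 0 = kj := by simp [hmPsdef, Finsupp.single_apply]
  have hmPs1 : mPs 1 = j1 + 1 := by simp [hmPsdef, Finsupp.single_apply]
  have hcoeffQ : MvPolynomial.coeff mQs Q = q := hqj
  have hcoeffP : MvPolynomial.coeff mPs P = p := hpj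
  have hmQ : mQs ∈ Q.support := by rw [MvPolynomial.mem_support_iff, hcoeffQ]; exact hq
  have hmP : mPs ∈ P.support := by rw [MvPolynomial.mem_support_iff, hcoeffP]; exact hp
  have hczQ : ∀ m ∈ Q.support, czw Q (m 0) (m 1) ≠ 0 := by
    intro m hm
    rw [czw, ← finsupp_fin2 m]
    exact MvPolynomial.mem_support_iff.1 hm
  have hczP : ∀ m ∈ P.support, czw P (m 0) (m 1) ≠ 0 := by
    intro m hm
    rw [czw, ← finsupp_fin2 m]
    exact MvPolynomial.mem_support_iff.1 hm
  -- key order inequalities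
  have hordQ : ∀ m ∈ Q.support, m ≠ mQs →
      N * kj + j1 * M + N + 1 ≤ N * (m 0) + (m 1) * M := by
    intro m hm hne
    have hcz := hczQ m hm
    by_cases hi : m 1 = j1
    · have h0 : kj + 1 ≤ m 0 := by
        by_contra h
        push_neg at h
        exact hcz (hi ▸ hqjlow (m 0) (by omega))
      have h0' : m 0 ≠ kj + 1 := by
        intro h
        exact hne (by rw [finsupp_fin2 m, h, hi])
      have h2 : kj + 2 ≤ m 0 := by omega
      have h3 : N * (kj + 2) ≤ N * (m 0) := Nat.mul_le_mul_left N h2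
      have h4 : N * (kj + 2) = N * kj + N + N := by ring
      have h5 : 1 ≤ N := by omega
      rw [hi]
      nlinarith
    · have hne' : m 1 + 1 ≠ j1 + 1 := by omega
      have key := h2Q (m 1 + 1) (by omega) hne' (m 0)
      simp only [Nat.add_sub_cancel] at key
      have hgt : ((kj:ℚ) + (((j1 + 1 : ℕ):ℚ) - ((m 1 + 1 : ℕ):ℚ)) * lam + 1) < ((m 0 : ℕ):ℚ) := by
        by_contra hle
        push_neg at hle
        exact hcz (key hle)
      have hNpos : (0:ℚ) < ((N:ℕ):ℚ) := by rw [hN]; exact_mod_cast Nat.succ_pos N1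
      have h3 : ((N:ℕ):ℚ) * ((kj:ℚ) + (((j1 + 1 : ℕ):ℚ) - ((m 1 + 1 : ℕ):ℚ)) * lam + 1)
          < ((N:ℕ):ℚ) * ((m 0 : ℕ):ℚ) := by
        exact mul_lt_mul_of_pos_left hgt hNpos
      have e : ((N:ℕ):ℚ) * ((kj:ℚ) + (((j1 + 1 : ℕ):ℚ) - ((m 1 + 1 : ℕ):ℚ)) * lam + 1)
          = ((N:ℕ):ℚ) * (kj:ℚ) + ((j1:ℕ):ℚ) * ((M:ℕ):ℚ) - ((m 1 : ℕ):ℚ) * ((M:ℕ):ℚ)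
            + ((N:ℕ):ℚ) := by
        push_cast
        linear_combination (((j1:ℕ):ℚ) - ((m 1 : ℕ):ℚ)) * hlamN
      rw [e] at h3
      have h6 : ((N * kj + j1 * M + N : ℕ):ℚ) < ((N * (m 0) + (m 1) * M : ℕ):ℚ) := by
        push_cast at h3 ⊢
        linarith
      have h7 : N * kj + j1 * M + N < N * (m 0) + (m 1) * M := by exact_mod_cast h6
      omega
  have hordP : ∀ m ∈ P.support, m ≠ mPs →
      N * kj + (j1 + 1) * M + 1 ≤ N * (m 0) + (m 1) * M := by
    intro m hm hne
    have hcz := hczP m hm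
    by_cases hi : m 1 = j1 + 1
    · have h0 : kj ≤ m 0 := by
        by_contra h
        push_neg at h
        exact hcz (hi ▸ hpjlow (m 0) (by omega))
      have h0' : m 0 ≠ kj := by
        intro h
        exact hne (by rw [finsupp_fin2 m, h, hi])
      have h2 : kj + 1 ≤ m 0 := by omega
      have h3 : N * (kj + 1) ≤ N * (m 0) := Nat.mul_le_mul_left N h2
      have h4 : N * (kj + 1) = N * kj + N := by ring
      have h5 : 1 ≤ N := by omega
      rw [hi]
      nlinarith
    · have key := h2P (m 1) hi (m 0)
      have hgt : ((kj:ℚ) + (((j1 + 1 : ℕ):ℚ) - ((m 1 : ℕ):ℚ)) * lam) < ((m 0 : ℕ):ℚ) := by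
        by_contra hle
        push_neg at hle
        exact hcz (key hle)
      have hNpos : (0:ℚ) < ((N:ℕ):ℚ) := by rw [hN]; exact_mod_cast Nat.succ_pos N1
      have h3 : ((N:ℕ):ℚ) * ((kj:ℚ) + (((j1 + 1 : ℕ):ℚ) - ((m 1 : ℕ):ℚ)) * lam)
          < ((N:ℕ):ℚ) * ((m 0 : ℕ):ℚ) := mul_lt_mul_of_pos_left hgt hNpos
      have e : ((N:ℕ):ℚ) * ((kj:ℚ) + (((j1 + 1 : ℕ):ℚ) - ((m 1 : ℕ):ℚ)) * lam)
          = ((N:ℕ):ℚ) * (kj:ℚ) + ((j1 + 1 :ℕ):ℚ) * ((M:ℕ):ℚ)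
            - ((m 1 : ℕ):ℚ) * ((M:ℕ):ℚ) := by
        push_cast
        linear_combination (((j1:ℕ):ℚ) + 1 - ((m 1 : ℕ):ℚ)) * hlamN
      rw [e] at h3
      have h6 : ((N * kj + (j1 + 1) * M : ℕ):ℚ) < ((N * (m 0) + (m 1) * M : ℕ):ℚ) := by
        push_cast at h3 ⊢
        linarith
      have h7 : N * kj + (j1 + 1) * M < N * (m 0) + (m 1) * M := by exact_mod_cast h6
      omega
  set D0 := N * kj + (j1 + 1) * M + N1 with hD0
  have hNsub : N - 1 = N1 := by omega
  -- ####### base lemma #######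
  have hbase : ∀ φ : PowerSeries ℂ, (∀ n < M, PowerSeries.coeff n φ = 0) → ∀ n ≤ D0,
      PowerSeries.coeff n (substS Q N φ * dSeries φ) =
        PowerSeries.coeff n
          ((N : PowerSeries ℂ) * (PowerSeries.X : PowerSeries ℂ) ^ (N - 1) * substS P N φ) := by
    intro φ hφ n hn
    have hφ' : ∀ n < M1 + 1, PowerSeries.coeff n φ = 0 := by rw [← hM]; exact hφ
    have hdφ := lo_dS hφ'
    have hdφval : PowerSeries.coeff M1 (dSeries φ) = (M:ℂ) * PowerSeries.coeff M φ := by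
      rw [hdφ.2, ← hM]
    rw [sumQ, sumP, map_sum, map_sum]
    have hQterm : ∀ m ∈ Q.support,
        (∀ n' < N * m 0 + ((m 1) * M + M1), PowerSeries.coeff n'
            (PowerSeries.C (MvPolynomial.coeff m Q) * PowerSeries.X ^ (N * m 0) *
              (φ ^ (m 1) * dSeries φ)) = 0) ∧
          PowerSeries.coeff (N * m 0 + ((m 1) * M + M1))
            (PowerSeries.C (MvPolynomial.coeff m Q) * PowerSeries.X ^ (N * m 0) *
              (φ ^ (m 1) * dSeries φ)) =
            MvPolynomial.coeff m Q * ((PowerSeries.coeff M φ) ^ (m 1) *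
              ((M:ℂ) * PowerSeries.coeff M φ)) := by
      intro m _
      have hp1 := lo_pow hφ (m 1)
      have hin := lo_mul hp1.1 hdφ.1
      have h := lo_CXmul (c := MvPolynomial.coeff m Q) (e := N * m 0) hin.1
      exact ⟨h.1, by rw [h.2, hin.2, hp1.2, hdφval]⟩
    have hPterm : ∀ m ∈ P.support,
        (∀ n' < (N - 1) + N * m 0 + (m 1) * M, PowerSeries.coeff n'
            (PowerSeries.C ((N:ℂ) * MvPolynomial.coeff m P) *
              PowerSeries.X ^ ((N - 1) + N * m 0) * φ ^ (m 1)) = 0) ∧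
          PowerSeries.coeff ((N - 1) + N * m 0 + (m 1) * M)
            (PowerSeries.C ((N:ℂ) * MvPolynomial.coeff m P) *
              PowerSeries.X ^ ((N - 1) + N * m 0) * φ ^ (m 1)) =
            (N:ℂ) * MvPolynomial.coeff m P * (PowerSeries.coeff M φ) ^ (m 1) := by
      intro m _
      have hp1 := lo_pow hφ (m 1)
      have h := lo_CXmul (c := (N:ℂ) * MvPolynomial.coeff m P) (e := (N - 1) + N * m 0) hp1.1
      exact ⟨h.1, by rw [h.2, hp1.2]⟩
    have hgeQ : ∀ m ∈ Q.support, D0 ≤ N * m 0 + ((m 1) * M + M1) ∧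
        (m ≠ mQs → D0 + 1 ≤ N * m 0 + ((m 1) * M + M1)) := by
      intro m hm
      by_cases he : m = mQs
      · subst he
        have e1 : N * (mQs 0) + ((mQs 1) * M + M1) = D0 := by
          rw [hmQs0, hmQs1, hD0, hM, hN]; ring
        exact ⟨by omega, fun h => absurd rfl h⟩
      · have h := hordQ m hm he
        have e1 : D0 + 1 = N * kj + j1 * M + N + 1 + M1 := by rw [hD0, hM, hN]; ring
        exact ⟨by omega, fun _ => by omega⟩
    have hgeP : ∀ m ∈ P.support, D0 ≤ (N - 1) + N * m 0 + (m 1) * M ∧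
        (m ≠ mPs → D0 + 1 ≤ (N - 1) + N * m 0 + (m 1) * M) := by
      intro m hm
      by_cases he : m = mPs
      · subst he
        have e1 : (N - 1) + N * (mPs 0) + (mPs 1) * M = D0 := by
          rw [hmPs0, hmPs1, hNsub, hD0]; ring
        exact ⟨by omega, fun h => absurd rfl h⟩
      · have h := hordP m hm he
        have e1 : D0 = N * kj + (j1 + 1) * M + N1 := hD0
        rw [hNsub]
        exact ⟨by omega, fun _ => by omega⟩
    rcases eq_or_lt_of_le hn with heq | hlt
    · subst heq
      have hQsum : (∑ m ∈ Q.support, PowerSeries.coeff D0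
          (PowerSeries.C (MvPolynomial.coeff m Q) * PowerSeries.X ^ (N * m 0) *
            (φ ^ (m 1) * dSeries φ))) =
          q * ((PowerSeries.coeff M φ) ^ j1 * ((M:ℂ) * PowerSeries.coeff M φ)) := by
        rw [Finset.sum_eq_single_of_mem mQs hmQ
          (fun m hm hne => (hQterm m hm).1 D0 (by have := (hgeQ m hm).2 hne; omega))]
        have hQv := (hQterm mQs hmQ).2
        have e1 : N * (mQs 0) + ((mQs 1) * M + M1) = D0 := by
          rw [hmQs0, hmQs1, hD0, hM, hN]; ring
        rw [e1] at hQv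
        rw [hQv, hcoeffQ, hmQs1]
      have hPsum : (∑ m ∈ P.support, PowerSeries.coeff D0
          (PowerSeries.C ((N:ℂ) * MvPolynomial.coeff m P) *
            PowerSeries.X ^ ((N - 1) + N * m 0) * φ ^ (m 1))) =
          (N:ℂ) * p * (PowerSeries.coeff M φ) ^ (j1 + 1) := by
        rw [Finset.sum_eq_single_of_mem mPs hmP
          (fun m hm hne => (hPterm m hm).1 D0 (by have := (hgeP m hm).2 hne; omega))]
        have hPv := (hPterm mPs hmP).2
        have e1 : (N - 1) + N * (mPs 0) + (mPs 1) * M = D0 := by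
          rw [hmPs0, hmPs1, hNsub, hD0]; ring
        rw [e1] at hPv
        rw [hPv, hcoeffP, hmPs1]
      rw [hQsum, hPsum]
      linear_combination (-(PowerSeries.coeff M φ) ^ (j1 + 1)) * hNp
    · trans (0:ℂ)
      · exact Finset.sum_eq_zero fun m hm =>
          (hQterm m hm).1 n (lt_of_lt_of_le hlt (hgeQ m hm).1)
      · exact (Finset.sum_eq_zero fun m hm =>
          (hPterm m hm).1 n (lt_of_lt_of_le hlt (hgeP m hm).1)).symm

  -- ####### difference lemma #######
  have hdiff : ∀ (φ ψ : PowerSeries ℂ) (r1 : ℕ),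
      (∀ n < M, PowerSeries.coeff n φ = 0) → (∀ n < M, PowerSeries.coeff n ψ = 0) →
      (∀ n < M + (r1 + 1), PowerSeries.coeff n φ = PowerSeries.coeff n ψ) →
      PowerSeries.coeff (D0 + (r1 + 1))
          (substS Q N φ * dSeries φ -
            (N : PowerSeries ℂ) * (PowerSeries.X : PowerSeries ℂ) ^ (N - 1) * substS P N φ) -
        PowerSeries.coeff (D0 + (r1 + 1))
          (substS Q N ψ * dSeries ψ -
            (N : PowerSeries ℂ) * (PowerSeries.X : PowerSeries ℂ) ^ (N - 1) * substS P N ψ) =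
        q * (PowerSeries.coeff M φ) ^ j1 * ((r1 + 1 : ℕ) : ℂ) *
          (PowerSeries.coeff (M + (r1 + 1)) φ - PowerSeries.coeff (M + (r1 + 1)) ψ) := by
    intro φ ψ r1 hφ hψ hagree
    set n0 := D0 + (r1 + 1) with hn0
    set k := M + (r1 + 1) with hk
    set α := PowerSeries.coeff M φ with hα
    have hαψ : PowerSeries.coeff M ψ = α := (hagree M (by omega)).symm
    set δ := PowerSeries.coeff k φ - PowerSeries.coeff k ψ with hδdef
    have hφ' : ∀ n < M1 + 1, PowerSeries.coeff n φ = 0 := by rw [← hM]; exact hφ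
    have hψ' : ∀ n < M1 + 1, PowerSeries.coeff n ψ = 0 := by rw [← hM]; exact hψ
    have hδlo : ∀ n < (M + r1) + 1, PowerSeries.coeff n (φ - ψ) = 0 := by
      intro n hn; rw [map_sub, hagree n (by omega), sub_self]
    have hdδ := lo_dS hδlo
    have hdδval : PowerSeries.coeff (M + r1) (dSeries (φ - ψ)) = ((k:ℕ):ℂ) * δ := by
      rw [hdδ.2]
      have e : (M + r1) + 1 = k := by omega
      rw [e, map_sub]
    have hdψ := lo_dS hψ'
    have hdψval : PowerSeries.coeff M1 (dSeries ψ) = (M:ℂ) * α := by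
      rw [hdψ.2, ← hM, hαψ]
    have hkM : M < k := by omega
    have hsplitQ : ∀ m : Fin 2 →₀ ℕ,
        (PowerSeries.C (MvPolynomial.coeff m Q) * PowerSeries.X ^ (N * m 0) *
            (φ ^ (m 1) * dSeries φ)) -
          (PowerSeries.C (MvPolynomial.coeff m Q) * PowerSeries.X ^ (N * m 0) *
            (ψ ^ (m 1) * dSeries ψ)) =
        (PowerSeries.C (MvPolynomial.coeff m Q) * PowerSeries.X ^ (N * m 0) *
            (φ ^ (m 1) * dSeries (φ - ψ))) +
          (PowerSeries.C (MvPolynomial.coeff m Q) * PowerSeries.X ^ (N * m 0) *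
            ((φ ^ (m 1) - ψ ^ (m 1)) * dSeries ψ)) := by
      intro m; rw [dSeries_sub]; ring
    have hsplitP : ∀ m : Fin 2 →₀ ℕ,
        (PowerSeries.C ((N:ℂ) * MvPolynomial.coeff m P) *
            PowerSeries.X ^ ((N - 1) + N * m 0) * φ ^ (m 1)) -
          (PowerSeries.C ((N:ℂ) * MvPolynomial.coeff m P) *
            PowerSeries.X ^ ((N - 1) + N * m 0) * ψ ^ (m 1)) =
        PowerSeries.C ((N:ℂ) * MvPolynomial.coeff m P) *
            PowerSeries.X ^ ((N - 1) + N * m 0) * (φ ^ (m 1) - ψ ^ (m 1)) := by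
      intro m; ring
    have hQzero : ∀ m ∈ Q.support, m ≠ mQs →
        PowerSeries.coeff n0
            (PowerSeries.C (MvPolynomial.coeff m Q) * PowerSeries.X ^ (N * m 0) *
              (φ ^ (m 1) * dSeries φ)) -
          PowerSeries.coeff n0
            (PowerSeries.C (MvPolynomial.coeff m Q) * PowerSeries.X ^ (N * m 0) *
              (ψ ^ (m 1) * dSeries ψ)) = 0 := by
      intro m hm hne
      rw [← map_sub, hsplitQ m, map_add]
      have hord := hordQ m hm hne
      have e3 : (j1 + 1) * M = j1 * M + M := by ring
      have hz1 : PowerSeries.coeff n0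
          (PowerSeries.C (MvPolynomial.coeff m Q) * PowerSeries.X ^ (N * m 0) *
            (φ ^ (m 1) * dSeries (φ - ψ))) = 0 := by
        have h1 := lo_CXmul (c := MvPolynomial.coeff m Q) (e := N * m 0)
          (lo_mul (lo_pow hφ (m 1)).1 hdδ.1).1
        exact h1.1 n0 (by omega)
      have hz2 : PowerSeries.coeff n0
          (PowerSeries.C (MvPolynomial.coeff m Q) * PowerSeries.X ^ (N * m 0) *
            ((φ ^ (m 1) - ψ ^ (m 1)) * dSeries ψ)) = 0 := by
        rcases Nat.eq_zero_or_pos (m 1) with hm1 | hm1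
        · rw [hm1]; simp
        · obtain ⟨i1, hm1'⟩ : ∃ i1, m 1 = i1 + 1 := ⟨m 1 - 1, by omega⟩
          have hdp := lo_diff_pow (le_of_lt hkM) hφ hψ (hagree M (by omega))
            (fun n' hn' => hagree n' hn') i1
          have h2 := lo_CXmul (c := MvPolynomial.coeff m Q) (e := N * m 0)
            (lo_mul hdp.1 hdψ.1).1
          rw [hm1']
          apply h2.1
          rw [hm1'] at hord
          have e4 : (i1 + 1) * M = i1 * M + M := by ring
          omega
      rw [hz1, hz2, add_zero]
    have hPzero : ∀ m ∈ P.support, m ≠ mPs →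
        PowerSeries.coeff n0
            (PowerSeries.C ((N:ℂ) * MvPolynomial.coeff m P) *
              PowerSeries.X ^ ((N - 1) + N * m 0) * φ ^ (m 1)) -
          PowerSeries.coeff n0
            (PowerSeries.C ((N:ℂ) * MvPolynomial.coeff m P) *
              PowerSeries.X ^ ((N - 1) + N * m 0) * ψ ^ (m 1)) = 0 := by
      intro m hm hne
      rw [← map_sub, hsplitP m]
      have hord := hordP m hm hne
      have e3 : (j1 + 1) * M = j1 * M + M := by ring
      rcases Nat.eq_zero_or_pos (m 1) with hm1 | hm1
      · rw [hm1]; simp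
      · obtain ⟨i1, hm1'⟩ : ∃ i1, m 1 = i1 + 1 := ⟨m 1 - 1, by omega⟩
        have hdp := lo_diff_pow (le_of_lt hkM) hφ hψ (hagree M (by omega))
          (fun n' hn' => hagree n' hn') i1
        have h2 := lo_CXmul (c := (N:ℂ) * MvPolynomial.coeff m P)
          (e := (N - 1) + N * m 0) hdp.1
        rw [hm1']
        apply h2.1
        rw [hm1'] at hord
        have e4 : (i1 + 1) * M = i1 * M + M := by ring
        omega
    -- value at mQs
    have hQval : PowerSeries.coeff n0
            (PowerSeries.C (MvPolynomial.coeff mQs Q) * PowerSeries.X ^ (N * mQs 0) *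
              (φ ^ (mQs 1) * dSeries φ)) -
          PowerSeries.coeff n0
            (PowerSeries.C (MvPolynomial.coeff mQs Q) * PowerSeries.X ^ (N * mQs 0) *
              (ψ ^ (mQs 1) * dSeries ψ)) =
        q * ((k:ℕ):ℂ) * α ^ j1 * δ + q * (j1:ℂ) * (M:ℂ) * α ^ j1 * δ := by
      rw [← map_sub, hsplitQ mQs, map_add, hmQs0, hmQs1, hcoeffQ]
      have hin1 := lo_mul (lo_pow hφ j1).1 hdδ.1
      have h1 := lo_CXmul (c := q) (e := N * (kj + 1)) hin1.1
      have e5 : N * (kj + 1) + (j1 * M + (M + r1)) = n0 := by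
        rw [hn0, hD0, hN]; ring
      have v1 : PowerSeries.coeff n0
          (PowerSeries.C q * PowerSeries.X ^ (N * (kj + 1)) *
            (φ ^ j1 * dSeries (φ - ψ))) = q * (α ^ j1 * (((k:ℕ):ℂ) * δ)) := by
        have hv := h1.2
        rw [hin1.2, (lo_pow hφ j1).2, hdδval, e5] at hv
        rw [hv, hα]
      rcases Nat.eq_zero_or_pos j1 with hj10 | hj1pos
      · subst hj10
        have v2 : PowerSeries.coeff n0
            (PowerSeries.C q * PowerSeries.X ^ (N * (kj + 1)) *
              ((φ ^ 0 - ψ ^ 0) * dSeries ψ)) = 0 := by simp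
        rw [v1, v2]
        push_cast
        ring
      · obtain ⟨j2, rfl⟩ : ∃ j2, j1 = j2 + 1 := ⟨j1 - 1, by omega⟩
        have hdp := lo_diff_pow (le_of_lt hkM) hφ hψ (hagree M (by omega))
          (fun n' hn' => hagree n' hn') j2
        have hin2 := lo_mul hdp.1 hdψ.1
        have h2 := lo_CXmul (c := q) (e := N * (kj + 1)) hin2.1
        have e6 : N * (kj + 1) + ((k + j2 * M) + M1) = n0 := by
          rw [hn0, hD0, hk, hN, hM]; ring
        have v2 : PowerSeries.coeff n0
            (PowerSeries.C q * PowerSeries.X ^ (N * (kj + 1)) *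
              ((φ ^ (j2 + 1) - ψ ^ (j2 + 1)) * dSeries ψ)) =
            q * ((((j2:ℂ) + 1) * α ^ j2 * δ) * ((M:ℂ) * α)) := by
          have hv := h2.2
          rw [hin2.2, hdp.2, hdψval, e6] at hv
          rw [hv, hα, hδdef]
        rw [v1, v2]
        push_cast
        ring
    have hPval : PowerSeries.coeff n0
            (PowerSeries.C ((N:ℂ) * MvPolynomial.coeff mPs P) *
              PowerSeries.X ^ ((N - 1) + N * mPs 0) * φ ^ (mPs 1)) -
          PowerSeries.coeff n0
            (PowerSeries.C ((N:ℂ) * MvPolynomial.coeff mPs P) *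
              PowerSeries.X ^ ((N - 1) + N * mPs 0) * ψ ^ (mPs 1)) =
        (N:ℂ) * p * (((j1:ℂ) + 1) * α ^ j1 * δ) := by
      rw [← map_sub, hsplitP mPs, hmPs0, hmPs1, hcoeffP]
      have hdp := lo_diff_pow (le_of_lt hkM) hφ hψ (hagree M (by omega))
        (fun n' hn' => hagree n' hn') j1
      have h2 := lo_CXmul (c := (N:ℂ) * p) (e := (N - 1) + N * kj) hdp.1
      have e7 : ((N - 1) + N * kj) + (k + j1 * M) = n0 := by
        rw [hNsub, hn0, hD0, hk]; ring
      have hv := h2.2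
      rw [hdp.2, e7] at hv
      rw [hv, hα, hδdef]
    -- assemble
    rw [map_sub, map_sub, sumQ, sumQ, sumP, sumP, map_sum, map_sum, map_sum, map_sum]
    have hQdiff : ((∑ m ∈ Q.support, PowerSeries.coeff n0
          (PowerSeries.C (MvPolynomial.coeff m Q) * PowerSeries.X ^ (N * m 0) *
            (φ ^ (m 1) * dSeries φ))) -
        (∑ m ∈ Q.support, PowerSeries.coeff n0
          (PowerSeries.C (MvPolynomial.coeff m Q) * PowerSeries.X ^ (N * m 0) *
            (ψ ^ (m 1) * dSeries ψ)))) =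
        q * ((k:ℕ):ℂ) * α ^ j1 * δ + q * (j1:ℂ) * (M:ℂ) * α ^ j1 * δ := by
      rw [← Finset.sum_sub_distrib]
      rw [Finset.sum_eq_single_of_mem mQs hmQ (fun m hm hne => hQzero m hm hne)]
      exact hQval
    have hPdiff : ((∑ m ∈ P.support, PowerSeries.coeff n0
          (PowerSeries.C ((N:ℂ) * MvPolynomial.coeff m P) *
            PowerSeries.X ^ ((N - 1) + N * m 0) * φ ^ (m 1))) -
        (∑ m ∈ P.support, PowerSeries.coeff n0
          (PowerSeries.C ((N:ℂ) * MvPolynomial.coeff m P) *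
            PowerSeries.X ^ ((N - 1) + N * m 0) * ψ ^ (m 1)))) =
        (N:ℂ) * p * (((j1:ℂ) + 1) * α ^ j1 * δ) := by
      rw [← Finset.sum_sub_distrib]
      rw [Finset.sum_eq_single_of_mem mPs hmP (fun m hm hne => hPzero m hm hne)]
      exact hPval
    have hkC : ((k:ℕ):ℂ) = (M:ℂ) + (r1:ℂ) + 1 := by rw [hk]; push_cast; ring
    push_cast
    linear_combination hQdiff - hPdiff + (q * α ^ j1 * δ) * hkC +
      (-(((j1:ℂ) + 1) * α ^ j1 * δ)) * hNp

  -- ####### main construction #######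
  have main : ∀ α : ℂ, α ≠ 0 →
      ∃ c ∈ localSols P Q 0 0, c lam = α ∧ ∀ q' : ℚ, q' < lam → c q' = 0 := by
    intro α hα
    set F : ℕ → (ℕ → ℂ) → ℂ := fun k' cc =>
      - (PowerSeries.coeff (D0 + (k' - M))
          (substS Q N (PowerSeries.mk cc) * dSeries (PowerSeries.mk cc) -
            (N : PowerSeries ℂ) * (PowerSeries.X : PowerSeries ℂ) ^ (N - 1) *
              substS P N (PowerSeries.mk cc))) / (q * α ^ j1 * ((k' - M : ℕ) : ℂ)) with hF
    set c : ℕ → ℂ := solC M α F with hcdef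
    set φ : PowerSeries ℂ := PowerSeries.mk c with hφdef
    have hcoeffφ : ∀ n, PowerSeries.coeff n φ = c n := fun n => by
      rw [hφdef, PowerSeries.coeff_mk]
    have hφlo : ∀ n < M, PowerSeries.coeff n φ = 0 := fun n hn => by
      rw [hcoeffφ]; exact solC_lt hn
    have hφM : PowerSeries.coeff M φ = α := by rw [hcoeffφ]; exact solC_eq
    have hEzero : ∀ n, PowerSeries.coeff n (substS Q N φ * dSeries φ -
        (N : PowerSeries ℂ) * (PowerSeries.X : PowerSeries ℂ) ^ (N - 1) * substS P N φ) = 0 := by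
      intro n
      rcases le_or_gt n D0 with hn | hn
      · rw [map_sub, hbase φ hφlo n hn, sub_self]
      · obtain ⟨r1, rfl⟩ : ∃ r1, n = D0 + (r1 + 1) := ⟨n - D0 - 1, by omega⟩
        set k := M + (r1 + 1) with hk
        set ψ : PowerSeries ℂ := PowerSeries.mk (fun i => if i < k then c i else 0) with hψdef
        have hcoeffψ : ∀ n', PowerSeries.coeff n' ψ = if n' < k then c n' else 0 := fun n' => by
          rw [hψdef, PowerSeries.coeff_mk]
        have hψlo : ∀ n' < M, PowerSeries.coeff n' ψ = 0 := by
          intro n' hn'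
          rw [hcoeffψ]
          by_cases h : n' < k
          · rw [if_pos h]; exact solC_lt hn'
          · rw [if_neg h]
        have hagree : ∀ n' < M + (r1 + 1), PowerSeries.coeff n' φ =
            PowerSeries.coeff n' ψ := by
          intro n' hn'
          rw [hcoeffφ, hcoeffψ, if_pos (by omega)]
        have hψk : PowerSeries.coeff k ψ = 0 := by rw [hcoeffψ, if_neg (lt_irrefl k)]
        have hck : c k = - (PowerSeries.coeff (D0 + (r1 + 1))
            (substS Q N ψ * dSeries ψ -
              (N : PowerSeries ℂ) * (PowerSeries.X : PowerSeries ℂ) ^ (N - 1) *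
                substS P N ψ)) / (q * α ^ j1 * ((r1 + 1 : ℕ) : ℂ)) := by
          show solC M α F k = _
          rw [solC_gt (show M < k by omega)]
          simp only [hF]
          have e1 : k - M = r1 + 1 := by omega
          rw [e1]
        have hd := hdiff φ ψ r1 hφlo hψlo hagree
        rw [hφM, ← hk] at hd
        have hδv : PowerSeries.coeff k φ - PowerSeries.coeff k ψ = c k := by
          rw [hcoeffφ, hψk, sub_zero]
        rw [hδv, hck] at hd
        have hden : q * α ^ j1 * ((r1 + 1 : ℕ) : ℂ) ≠ 0 := by
          apply mul_ne_zero (mul_ne_zero hq (pow_ne_zero _ hα))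
          exact_mod_cast Nat.succ_ne_zero r1
        have h2 : q * α ^ j1 * ((r1 + 1 : ℕ) : ℂ) *
            (- (PowerSeries.coeff (D0 + (r1 + 1))
              (substS Q N ψ * dSeries ψ -
                (N : PowerSeries ℂ) * (PowerSeries.X : PowerSeries ℂ) ^ (N - 1) *
                  substS P N ψ)) / (q * α ^ j1 * ((r1 + 1 : ℕ) : ℂ))) =
            - PowerSeries.coeff (D0 + (r1 + 1))
              (substS Q N ψ * dSeries ψ -
                (N : PowerSeries ℂ) * (PowerSeries.X : PowerSeries ℂ) ^ (N - 1) *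
                  substS P N ψ) := by
          rw [mul_comm]
          exact div_mul_cancel₀ _ hden
        rw [h2] at hd
        linear_combination hd
    have hEq : substS Q N φ * dSeries φ =
        (N : PowerSeries ℂ) * (PowerSeries.X : PowerSeries ℂ) ^ (N - 1) * substS P N φ := by
      have h0 : substS Q N φ * dSeries φ -
          (N : PowerSeries ℂ) * (PowerSeries.X : PowerSeries ℂ) ^ (N - 1) * substS P N φ = 0 :=
        PowerSeries.ext fun n => by rw [hEzero n, map_zero]
      rw [sub_eq_zero] at h0
      exact h0
    -- the Puiseux coefficient function
    set c' : ℚ → ℂ := fun s => if s.den ∣ N ∧ 0 < s then c ((s * ((N:ℕ):ℚ)).num.toNat) else 0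
      with hc'
    have hNQpos : (0:ℚ) < ((N:ℕ):ℚ) := by exact_mod_cast (by omega : 0 < N)
    have claimA : ∀ k' : ℕ, c' (((k':ℕ):ℚ) / ((N:ℕ):ℚ)) = c k' := by
      intro k'
      rcases Nat.eq_zero_or_pos k' with rfl | hk'
      · simp only [hc', Nat.cast_zero, zero_div]
        rw [if_neg (by simp)]
        exact (solC_lt (by omega)).symm
      · have hs : (0:ℚ) < ((k':ℕ):ℚ) / ((N:ℕ):ℚ) :=
          div_pos (by exact_mod_cast hk') hNQpos
        have hden : (((k':ℕ):ℚ) / ((N:ℕ):ℚ)).den ∣ N := by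
          have h := Rat.den_dvd (k' : ℤ) (N : ℤ)
          rw [Rat.divInt_eq_div] at h
          have h' : ((((k':ℕ):ℚ) / ((N:ℕ):ℚ)).den : ℤ) ∣ (N : ℤ) := by
            convert h using 2 <;> push_cast <;> ring
          exact_mod_cast h'
        have hval : (((k':ℕ):ℚ) / ((N:ℕ):ℚ)) * ((N:ℕ):ℚ) = ((k':ℕ):ℚ) :=
          div_mul_cancel₀ _ (ne_of_gt hNQpos)
        simp only [hc']
        rw [if_pos ⟨hden, hs⟩, hval]
        norm_num
    have claimB : ∀ s : ℚ, c' s ≠ 0 → 0 < s ∧ ∃ k' : ℕ, M ≤ k' ∧ s = ((k':ℕ):ℚ) / ((N:ℕ):ℚ) := by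
      intro s hcs
      simp only [hc'] at hcs
      by_cases hcond : s.den ∣ N ∧ 0 < s
      · obtain ⟨hdvd, hspos⟩ := hcond
        rw [if_pos ⟨hdvd, hspos⟩] at hcs
        obtain ⟨t, ht⟩ := hdvd
        have h1 : s * ((N:ℕ):ℚ) = ((s.num * (t:ℤ) : ℤ):ℚ) := by
          rw [ht]
          push_cast
          rw [← mul_assoc, Rat.mul_den_eq_num]
        have hnonneg : (0:ℤ) ≤ s.num * (t:ℤ) :=
          mul_nonneg (le_of_lt (Rat.num_pos.2 hspos)) (Int.natCast_nonneg t)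
        have hk'Q : (((s * ((N:ℕ):ℚ)).num.toNat : ℕ) : ℚ) = s * ((N:ℕ):ℚ) := by
          rw [h1, Rat.num_intCast]
          have h3 := Int.toNat_of_nonneg hnonneg
          exact_mod_cast congrArg (Int.cast : ℤ → ℚ) h3
        refine ⟨hspos, (s * ((N:ℕ):ℚ)).num.toNat, ?_, ?_⟩
        · by_contra h
          push_neg at h
          exact hcs (solC_lt h)
        · rw [hk'Q]
          field_simp
      · rw [if_neg hcond] at hcs
        exact absurd rfl hcs
    have hlamval : lam = ((M:ℕ):ℚ) / ((N:ℕ):ℚ) :=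
      (eq_div_iff (ne_of_gt hNQpos)).mpr hlamN
    have hc'lam : c' lam = α := by
      rw [hlamval, claimA M]
      exact solC_eq
    have hc'lt : ∀ q' : ℚ, q' < lam → c' q' = 0 := by
      intro q' hq'
      by_contra h
      obtain ⟨hpos, k', hMk, hsk⟩ := claimB q' h
      have hle : lam ≤ q' := by
        rw [hsk, hlamval]
        exact (div_le_div_iff_of_pos_right hNQpos).mpr (by exact_mod_cast hMk)
      linarith
    have hc'0 : c' ≠ 0 := by
      intro h
      apply hα
      rw [← hc'lam, h]
      rfl
    have htoS : toSeries N c' = φ := by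
      apply PowerSeries.ext
      intro n
      rw [toSeries, PowerSeries.coeff_mk, claimA n, hcoeffφ]
    refine ⟨c', ?_, hc'lam, hc'lt⟩
    show c' ≠ 0 ∧ IsPuiseuxSol (shiftP P 0 0) (shiftP Q 0 0) c'
    rw [shiftP_zero P, shiftP_zero Q]
    refine ⟨hc'0, N, by omega, fun s hs => ?_, by rw [htoS]; exact hEq⟩
    obtain ⟨hpos, k', _, hsk⟩ := claimB s hs
    exact ⟨hpos, k', hsk⟩

  have hne1 : ∀ n : ℕ, ((n:ℂ) + 1) ≠ 0 := by
    intro n h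
    have h2 : ((n + 1 : ℕ) : ℂ) = 0 := by push_cast; linear_combination h
    exact Nat.succ_ne_zero n (by exact_mod_cast h2)
  constructor
  · apply Set.infinite_of_injective_forall_mem
      (f := fun n : ℕ => (main ((n:ℂ) + 1) (hne1 n)).choose)
    · intro a b hab
      have ha := (main ((a:ℂ) + 1) (hne1 a)).choose_spec
      have hb := (main ((b:ℂ) + 1) (hne1 b)).choose_spec
      have h1 : ((a:ℂ) + 1) = ((b:ℂ) + 1) := by
        rw [← ha.2.1, ← hb.2.1]
        exact congrFun hab lam
      have h2 : (a:ℂ) = (b:ℂ) := by linear_combination h1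
      exact_mod_cast h2
    · intro a
      exact (main ((a:ℂ) + 1) (hne1 a)).choose_spec.1
  · exact ⟨{0}, Set.finite_singleton 0, fun α hα => main α (by simpa using hα)⟩
end

section
/- Let a, b, c ∈ ℂ. The polynomial f(z,w) = a·(z−1) + w is a Darboux polynomial of the system ż = z·(z + c·w − 1), ẇ = w·(b·z + w − a) with cofactor R_f(z,w) = z + w if and only if a·(1−c) + (1−b) = 0. -/
open MvPolynomial

/-- Numerator `w·(b·z + w - a)` of the Lotka–Volterra equation. -/
noncomputable def lvP (a b : ℂ) : MvPolynomial (Fin 2) ℂ :=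
  X 1 * (C b * X 0 + X 1 - C a)

/-- Denominator `z·(z + c·w - 1)` of the Lotka–Volterra equation. -/
noncomputable def lvQ (c : ℂ) : MvPolynomial (Fin 2) ℂ :=
  X 0 * (X 0 + C c * X 1 - 1)
/-- **(paper, Prop 2 computation).** `f = a(z-1) + w` is a Darboux polynomial of the system
`ż = z(z+cw-1)`, `ẇ = w(bz+w-a)` with cofactor `z + w` if and only if
`a(1-c) + (1-b) = 0`. -/
theorem lv_line_isDarboux_iff (a b c : ℂ) :
    IsDarboux (lvQ c) (lvP a b) (C a * (X 0 - 1) + X 1) (X 0 + X 1) ↔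
      a * (1 - c) + (1 - b) = 0 := by
  have hd0 : (pderiv 0) (C a * (X 0 - 1) + X 1 : MvPolynomial (Fin 2) ℂ) = C a := by
    simp [pderiv_X]
  have hd1 : (pderiv 1) (C a * (X 0 - 1) + X 1 : MvPolynomial (Fin 2) ℂ) = 1 := by
    simp [pderiv_X]
  have key : lvQ c * (pderiv 0) (C a * (X 0 - 1) + X 1) +
      lvP a b * (pderiv 1) (C a * (X 0 - 1) + X 1) =
      (X 0 + X 1) * (C a * (X 0 - 1) + X 1)
        - C (a * (1 - c) + (1 - b)) * (X 0 * X 1) := by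
    rw [hd0, hd1, lvQ, lvP]
    push_cast [map_add, map_sub, map_mul, map_one]
    ring
  unfold IsDarboux
  rw [key]
  constructor
  · intro h
    have h2 : C (a * (1 - c) + (1 - b)) * (X 0 * X 1 : MvPolynomial (Fin 2) ℂ) = 0 := by
      linear_combination (norm := ring_nf) -h
    rcases mul_eq_zero.mp h2 with h3 | h3
    · exact (C_eq_zero).mp h3
    · exact absurd h3 (by simp [X_ne_zero])
  · intro h
    rw [h]
    simp
end
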